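/- arXiv:2303.10715 — 6 statements merged into one kernel-verified Lean document; each statement's English description precedes it below -/
import Mathlib

section
/- Let $H, G \leq W_n$ with $|H| = |G|$ and $H \cap K_n = \{\mathrm{id}\}$. If $H$ is elementwise $K_n$-conjugate into $G$ (every element of $H$ can be conjugated into $G$ by some element of $K_n$), then $G \cap K_n = \{\mathrm{id}\}$. -/
/-- Leaves of the complete rooted binary tree of depth `n`. -/
abbrev Leaf (n : ℕ) := Fin n → Bool

/-- Two leaves agree on the first `k` levels. -/
def agree (n k : ℕ) (x y : Leaf n) : Prop := ∀ i : Fin n, (i : ℕ) < k → x i = y i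

/-- The automorphism group of the depth-`n` complete rooted binary tree, realized as the
subgroup of permutations of the leaves preserving, for each `k`, agreement on the first
`k` levels. -/
def W (n : ℕ) : Subgroup (Equiv.Perm (Leaf n)) where
  carrier := {σ | ∀ (k : ℕ) (x y : Leaf n), agree n k x y ↔ agree n k (σ x) (σ y)}
  one_mem' := by intro k x y; rfl
  mul_mem' := by
    intro a b ha hb k x y
    simpa [Equiv.Perm.mul_apply] using (hb k x y).trans (ha k (b x) (b y))
  inv_mem' := by
    intro a ha k x y
    simpa using (ha k (a⁻¹ x) (a⁻¹ y)).symm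

/-- Restriction of a leaf to the first `n-1` levels. -/
def res {n : ℕ} (x : Leaf n) : Leaf (n - 1) := fun i => x (Fin.castLE (Nat.sub_le n 1) i)

/-- Extension of a depth-`n-1` vertex to a leaf. -/
def ext {n : ℕ} (p : Leaf (n - 1)) : Leaf n :=
  fun i => if h : (i : ℕ) < n - 1 then p ⟨i, h⟩ else false

lemma res_ext {n : ℕ} (p : Leaf (n - 1)) : res (ext p) = p := by
  funext i
  simp [res, ext, i.isLt]

lemma agree_iff_res {n : ℕ} (x y : Leaf n) : agree n (n - 1) x y ↔ res x = res y := by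
  constructor
  · intro h; funext i; exact h _ i.isLt
  · intro h i hi
    have h2 : Fin.castLE (Nat.sub_le n 1) (⟨(i : ℕ), hi⟩ : Fin (n - 1)) = i := by
      ext; rfl
    have := congrFun h (⟨(i : ℕ), hi⟩ : Fin (n - 1))
    simpa [res, h2] using this

/-- The natural restriction homomorphism `π_n : W_n → Aut(T_{n-1})`. -/
def treePi (n : ℕ) : (W n) →* Equiv.Perm (Leaf (n - 1)) where
  toFun σ :=
    { toFun := fun p => res ((σ : Equiv.Perm (Leaf n)) (ext p))
      invFun := fun p => res ((σ : Equiv.Perm (Leaf n))⁻¹ (ext p))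
      left_inv := by
        intro p
        have h1 : agree n (n - 1) (ext (res ((σ : Equiv.Perm (Leaf n)) (ext p))))
            ((σ : Equiv.Perm (Leaf n)) (ext p)) :=
          (agree_iff_res _ _).2 (res_ext _)
        have hinv := (W n).inv_mem σ.2
        have h2 := (hinv (n - 1) _ _).1 h1
        have h3 := (agree_iff_res _ _).1 h2
        simpa [res_ext] using h3
      right_inv := by
        intro p
        have h1 : agree n (n - 1) (ext (res ((σ : Equiv.Perm (Leaf n))⁻¹ (ext p))))
            ((σ : Equiv.Perm (Leaf n))⁻¹ (ext p)) :=
          (agree_iff_res _ _).2 (res_ext _)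
        have h2 := (σ.2 (n - 1) _ _).1 h1
        have h3 := (agree_iff_res _ _).1 h2
        simpa [res_ext] using h3 }
  map_one' := by
    refine Equiv.ext fun p => ?_
    simp [res_ext]
  map_mul' := by
    intro σ τ
    refine Equiv.ext fun p => ?_
    have h1 : agree n (n - 1) (ext (res ((τ : Equiv.Perm (Leaf n)) (ext p))))
        ((τ : Equiv.Perm (Leaf n)) (ext p)) := (agree_iff_res _ _).2 (res_ext _)
    have h2 := (σ.2 (n - 1) _ _).1 h1
    have h3 := (agree_iff_res _ _).1 h2
    simpa using h3.symm

/-- `K_n`, the kernel of `π_n`, viewed as a subgroup of the permutations of the leaves. -/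
def K (n : ℕ) : Subgroup (Equiv.Perm (Leaf n)) :=
  Subgroup.map (W n).subtype (treePi n).ker

/-- The conjugate `X^a = a⁻¹ X a` of a subgroup `X` by an element `a`. -/
def conjBy {G : Type*} [Group G] (a : G) (X : Subgroup G) : Subgroup G :=
  X.map (MulAut.conj a⁻¹).toMonoidHom

/-- `M` is a maximal subgroup of `H` (inside a common ambient group). -/
def IsMaximalIn {G : Type*} [Group G] (M H : Subgroup G) : Prop :=
  M < H ∧ ∀ X : Subgroup G, M < X → X ≤ H → X = H

/-- The Frattini subgroup of `H`: the intersection of all maximal subgroups of `H`. -/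
def frattiniIn {G : Type*} [Group G] (H : Subgroup G) : Subgroup G :=
  H ⊓ sInf {M | IsMaximalIn M H}

/-- Lemma 3.1: if `|H| = |G|`, `H ∩ K_n = 1` and `H` is elementwise
`K_n`-conjugate into `G`, then `G ∩ K_n = 1`. -/
theorem stmt3 (n : ℕ) (H G : Subgroup (Equiv.Perm (Leaf n)))
    (hH : H ≤ W n) (hG : G ≤ W n)
    (hcard : Nat.card H = Nat.card G)
    (htriv : H ⊓ K n = ⊥)
    (helem : ∀ h ∈ H, ∃ a ∈ K n, a⁻¹ * h * a ∈ G) :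
    G ⊓ K n = ⊥ := by
  classical
  set φ := treePi n with hφdef
  set Hw := H.subgroupOf (W n) with hHw
  set Gw := G.subgroupOf (W n) with hGw
  have hK : ∀ w : W n, ((w : Equiv.Perm (Leaf n)) ∈ K n ↔ w ∈ φ.ker) := by
    intro w
    constructor
    · rintro ⟨v, hv, hvw⟩
      have : v = w := Subtype.ext hvw
      rwa [← this]
    · intro hw; exact ⟨w, hw, rfl⟩
  -- injectivity of φ on Hw
  have hinjH : Function.Injective (φ.subgroupMap Hw) := by
    intro x y hxy
    have hxy' : φ (x : W n) = φ (y : W n) := congrArg Subtype.val hxy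
    have hker : ((x : W n) * (y : W n)⁻¹) ∈ φ.ker := by
      simp [MonoidHom.mem_ker, map_mul, map_inv, hxy']
    have hKmem : (((x : W n) * (y : W n)⁻¹ : W n) : Equiv.Perm (Leaf n)) ∈ K n :=
      (hK _).2 hker
    have hHmem : (((x : W n) * (y : W n)⁻¹ : W n) : Equiv.Perm (Leaf n)) ∈ H := by
      have hx : ((x : W n) : Equiv.Perm (Leaf n)) ∈ H := x.2
      have hy : ((y : W n) : Equiv.Perm (Leaf n)) ∈ H := y.2
      simpa using H.mul_mem hx (H.inv_mem hy)
    have : (((x : W n) * (y : W n)⁻¹ : W n) : Equiv.Perm (Leaf n)) ∈ H ⊓ K n :=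
      ⟨hHmem, hKmem⟩
    rw [htriv, Subgroup.mem_bot] at this
    have h1 : ((x : W n) * (y : W n)⁻¹ : W n) = 1 := Subtype.ext this
    have : (x : W n) = (y : W n) := by
      have := mul_inv_eq_one.mp h1
      exact this
    exact Subtype.ext this
  have hsurjH := φ.subgroupMap_surjective Hw
  have hcardH : Nat.card (Hw.map φ) = Nat.card Hw :=
    (Nat.card_eq_of_bijective _ ⟨hinjH, hsurjH⟩).symm
  have hcardHw : Nat.card Hw = Nat.card H :=
    Nat.card_congr (Subgroup.subgroupOfEquivOfLe hH).toEquiv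
  have hcardGw : Nat.card Gw = Nat.card G :=
    Nat.card_congr (Subgroup.subgroupOfEquivOfLe hG).toEquiv
  -- φ(Hw) ≤ φ(Gw)
  have hle : Hw.map φ ≤ Gw.map φ := by
    rintro _ ⟨x, hx, rfl⟩
    have hxH : ((x : W n) : Equiv.Perm (Leaf n)) ∈ H := hx
    obtain ⟨a, haK, haG⟩ := helem _ hxH
    obtain ⟨v, hv, rfl⟩ := haK
    refine ⟨v⁻¹ * x * v, ?_, ?_⟩
    · show (((v⁻¹ * x * v : W n)) : Equiv.Perm (Leaf n)) ∈ G
      simpa using haG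
    · have hv1 : φ v = 1 := hv
      simp [map_mul, map_inv, hv1]
  -- card comparisons
  have hfin : Nat.card (Gw.map φ) = Nat.card Gw := by
    have h1 : Nat.card (Hw.map φ) ≤ Nat.card (Gw.map φ) :=
      Subgroup.card_le_of_le hle
    have h2 : Nat.card (Gw.map φ) ≤ Nat.card Gw :=
      Nat.card_le_card_of_surjective _ (φ.subgroupMap_surjective Gw)
    omega
  have hinjG : Function.Injective (φ.subgroupMap Gw) :=
    ((Nat.bijective_iff_surjective_and_card _).mpr
      ⟨φ.subgroupMap_surjective Gw, hfin.symm⟩).1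
  -- conclude
  rw [eq_bot_iff]
  rintro g ⟨hgG, hgK⟩
  have hgW : g ∈ W n := hG hgG
  set w : W n := ⟨g, hgW⟩ with hw
  have hwGw : w ∈ Gw := hgG
  have hwker : w ∈ φ.ker := (hK w).1 hgK
  have hwk : φ w = 1 := hwker
  have h1 : φ.subgroupMap Gw ⟨w, hwGw⟩ = 1 := Subtype.ext hwk
  have h2 : (⟨w, hwGw⟩ : Gw) = 1 := by
    apply hinjG
    rw [h1, map_one]
  have : w = 1 := congrArg Subtype.val h2
  have : g = 1 := congrArg Subtype.val this
  simp [this, Subgroup.mem_bot]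
end

section
/- Let $H, G \leq W_n$ with $|H| = |G|$, $H \cap K_n = \{\mathrm{id}\}$, and suppose $H$ is elementwise $K_n$-conjugate into $G$. Then for any subgroup $H_1 \leq H$ there exists a subgroup $G_1 \leq G$ such that $|H_1| = |G_1|$ and $H_1$ is elementwise $K_n$-conjugate into $G_1$. -/
section AbstractLemma
open Set

lemma abstract {Γ Δ : Type*} [Group Γ] [Group Δ] [Finite Γ]
    (π : Γ →* Δ) (H G H₁ : Subgroup Γ)
    (hcard : Nat.card H = Nat.card G)
    (htriv : ∀ h ∈ H, π h = 1 → h = 1)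
    (helem : ∀ h ∈ H, ∃ a : Γ, π a = 1 ∧ a⁻¹ * h * a ∈ G)
    (hH₁ : H₁ ≤ H) :
    ∃ G₁ : Subgroup Γ, G₁ ≤ G ∧ Nat.card H₁ = Nat.card G₁ ∧
      ∀ h ∈ H₁, ∃ a : Γ, π a = 1 ∧ a⁻¹ * h * a ∈ G₁ := by
  have hfin : ∀ s : Set Γ, s.Finite := fun s => s.toFinite
  -- π is injective on H
  have hinjH : Set.InjOn π (H : Set Γ) := by
    intro x hx y hy hxy
    have hmem : x * y⁻¹ ∈ H := mul_mem hx (inv_mem hy)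
    have : π (x * y⁻¹) = 1 := by
      rw [map_mul, map_inv, hxy, mul_inv_cancel]
    have := htriv _ hmem this
    exact mul_inv_eq_one.mp this
  -- π h = π (a⁻¹ h a) when π a = 1
  have hconj : ∀ (a h : Γ), π a = 1 → π (a⁻¹ * h * a) = π h := by
    intro a h ha
    simp [map_mul, map_inv, ha]
  -- π(H) ⊆ π(G)
  have hsub : π '' (H : Set Γ) ⊆ π '' (G : Set Γ) := by
    rintro _ ⟨h, hh, rfl⟩
    obtain ⟨a, ha, hg⟩ := helem h hh
    exact ⟨_, hg, hconj a h ha⟩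
  have hHc : Nat.card H = ((H : Set Γ)).ncard := Nat.card_coe_set_eq _
  have hGc : Nat.card G = ((G : Set Γ)).ncard := Nat.card_coe_set_eq _
  have hcards : Nat.card H = (π '' (H : Set Γ)).ncard := by
    rw [ncard_image_of_injOn hinjH]; exact hHc
  have hGcard : (π '' (G : Set Γ)).ncard ≤ Nat.card G := by
    rw [hGc]
    exact ncard_image_le (Set.toFinite _)
  have heqset : π '' (H : Set Γ) = π '' (G : Set Γ) :=
    eq_of_subset_of_ncard_le hsub (by omega) (Set.toFinite _)
  -- π injective on G
  have hinjG : Set.InjOn π (G : Set Γ) := by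
    apply injOn_of_ncard_image_eq _ (Set.toFinite _)
    rw [← heqset, ← hcards, hcard, hGc]
  -- define G₁
  refine ⟨G ⊓ (H₁.map π).comap π, inf_le_left, ?_, ?_⟩
  · -- cardinality
    have himg : π '' ((G ⊓ (H₁.map π).comap π : Subgroup Γ) : Set Γ) = π '' (H₁ : Set Γ) := by
      apply Set.Subset.antisymm
      · rintro _ ⟨g, hg, rfl⟩
        obtain ⟨hg1, hg2⟩ := hg
        obtain ⟨h, hh, hπ⟩ := hg2
        exact ⟨h, hh, hπ⟩
      · rintro _ ⟨h, hh, rfl⟩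
        obtain ⟨a, ha, hg⟩ := helem h (hH₁ hh)
        exact ⟨a⁻¹ * h * a, ⟨hg, ⟨h, hh, (hconj a h ha).symm⟩⟩, hconj a h ha⟩
    have hinj1 : Set.InjOn π ((G ⊓ (H₁.map π).comap π : Subgroup Γ) : Set Γ) :=
      hinjG.mono (by exact_mod_cast inf_le_left)
    have h1 : Nat.card H₁ = ((H₁ : Set Γ)).ncard := Nat.card_coe_set_eq _
    have h2 : Nat.card (G ⊓ (H₁.map π).comap π : Subgroup Γ) =
        (((G ⊓ (H₁.map π).comap π : Subgroup Γ) : Set Γ)).ncard := Nat.card_coe_set_eq _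
    rw [h1, h2, ← ncard_image_of_injOn hinj1, himg,
      ncard_image_of_injOn (hinjH.mono (by exact_mod_cast hH₁))]
  · intro h hh
    obtain ⟨a, ha, hg⟩ := helem h (hH₁ hh)
    exact ⟨a, ha, ⟨hg, ⟨h, hh, (hconj a h ha).symm⟩⟩⟩


end AbstractLemma

/-- Lemma 3.2: under the same hypotheses, every subgroup `H₁ ≤ H` is
elementwise `K_n`-conjugate into some subgroup `G₁ ≤ G` with `|H₁| = |G₁|`. -/
theorem stmt4 (n : ℕ) (H G H₁ : Subgroup (Equiv.Perm (Leaf n)))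
    (hH : H ≤ W n) (hG : G ≤ W n)
    (hcard : Nat.card H = Nat.card G)
    (htriv : H ⊓ K n = ⊥)
    (helem : ∀ h ∈ H, ∃ a ∈ K n, a⁻¹ * h * a ∈ G)
    (hH₁ : H₁ ≤ H) :
    ∃ G₁ : Subgroup (Equiv.Perm (Leaf n)), G₁ ≤ G ∧ Nat.card H₁ = Nat.card G₁ ∧
      ∀ h ∈ H₁, ∃ a ∈ K n, a⁻¹ * h * a ∈ G₁ := by
  classical
  have hW₁ : H₁ ≤ W n := hH₁.trans hH
  have hyp1 : Nat.card (H.subgroupOf (W n)) = Nat.card (G.subgroupOf (W n)) := by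
    have e1 : Nat.card (H.subgroupOf (W n)) = Nat.card H :=
      Nat.card_congr (Subgroup.subgroupOfEquivOfLe hH).toEquiv
    have e2 : Nat.card (G.subgroupOf (W n)) = Nat.card G :=
      Nat.card_congr (Subgroup.subgroupOfEquivOfLe hG).toEquiv
    rw [e1, e2, hcard]
  have hyp2 : ∀ h ∈ H.subgroupOf (W n), (treePi n) h = 1 → h = 1 := by
    intro h hh hker
    have h1 : (h : Equiv.Perm (Leaf n)) ∈ H ⊓ K n :=
      ⟨Subgroup.mem_subgroupOf.mp hh, ⟨h, hker, rfl⟩⟩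
    rw [htriv] at h1
    exact Subtype.ext (Subgroup.mem_bot.mp h1)
  have hyp3 : ∀ h ∈ H.subgroupOf (W n), ∃ a : W n, (treePi n) a = 1 ∧
      a⁻¹ * h * a ∈ G.subgroupOf (W n) := by
    intro h hh
    obtain ⟨a, haK, hg⟩ := helem _ (Subgroup.mem_subgroupOf.mp hh)
    obtain ⟨b, hb, rfl⟩ := haK
    exact ⟨b, hb, Subgroup.mem_subgroupOf.mpr hg⟩
  have hyp4 : H₁.subgroupOf (W n) ≤ H.subgroupOf (W n) :=
    fun x hx => Subgroup.mem_subgroupOf.mpr (hH₁ (Subgroup.mem_subgroupOf.mp hx))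
  obtain ⟨G₁', hle', hcard', helem'⟩ := abstract (treePi n)
      (H.subgroupOf (W n)) (G.subgroupOf (W n)) (H₁.subgroupOf (W n))
      hyp1 hyp2 hyp3 hyp4
  refine ⟨G₁'.map (W n).subtype, ?_, ?_, ?_⟩
  · rintro x ⟨y, hy, rfl⟩
    exact Subgroup.mem_subgroupOf.mp (hle' hy)
  · have e1 : Nat.card H₁ = Nat.card (H₁.subgroupOf (W n)) :=
      (Nat.card_congr (Subgroup.subgroupOfEquivOfLe hW₁).toEquiv).symm
    have e2 : Nat.card (G₁'.map (W n).subtype) = Nat.card G₁' :=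
      (Nat.card_congr (Subgroup.equivMapOfInjective G₁' _
        (W n).subtype_injective).toEquiv).symm
    rw [e1, hcard', e2]
  · intro h hh
    have hhW : h ∈ W n := hW₁ hh
    have : (⟨h, hhW⟩ : W n) ∈ H₁.subgroupOf (W n) := Subgroup.mem_subgroupOf.mpr hh
    obtain ⟨a, ha, hg⟩ := helem' _ this
    exact ⟨(a : Equiv.Perm (Leaf n)), ⟨a, ha, rfl⟩, ⟨a⁻¹ * ⟨h, hhW⟩ * a, hg, rfl⟩⟩
end

section
/- Let $H, G \leq W_n$ be non-cyclic subgroups with $H \cap K_n = \{\mathrm{id}\}$, $|H| = |G|$, and $H$ elementwise $K_n$-conjugate into $G$. If $H_1, H_2$ are two distinct maximal subgroups of $H$ and $H_1^a, H_2^b \leq G$ for some $a, b \in K_n$, then $G = \langle H_1^a, H_2^b \rangle$. -/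
lemma KleW (n : ℕ) : K n ≤ W n := by
  intro x hx
  obtain ⟨y, _, rfl⟩ := hx
  exact y.2

lemma mem_K_iff {n : ℕ} {x : Equiv.Perm (Leaf n)} (hx : x ∈ W n) :
    x ∈ K n ↔ treePi n ⟨x, hx⟩ = 1 := by
  constructor
  · rintro ⟨y, hy, hyx⟩
    have h : (⟨x, hx⟩ : W n) = y := Subtype.ext hyx.symm
    rw [h]; exact hy
  · intro h
    exact ⟨⟨x, hx⟩, h, rfl⟩

lemma card_map_eq_of_ker_triv {G G' : Type*} [Group G] [Group G'] (f : G →* G')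
    (X : Subgroup G) (hinj : ∀ x ∈ X, f x = 1 → x = 1) :
    Nat.card (X.map f) = Nat.card X := by
  have hb : Function.Bijective (fun x : X => (⟨f x, ⟨x, x.2, rfl⟩⟩ : X.map f)) := by
    constructor
    · intro x y hxy
      have h1 : f (x : G) = f (y : G) := congrArg Subtype.val hxy
      have h2 : f ((x : G) * (y : G)⁻¹) = 1 := by simp [h1]
      have h3 := hinj _ (X.mul_mem x.2 (X.inv_mem y.2)) h2
      exact Subtype.ext (mul_inv_eq_one.mp h3)
    · rintro ⟨z, x, hx, rfl⟩
      exact ⟨⟨x, hx⟩, rfl⟩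
  exact (Nat.card_eq_of_bijective _ hb).symm

lemma card_map_le' {G G' : Type*} [Group G] [Group G'] [Finite G] (f : G →* G')
    (X : Subgroup G) : Nat.card (X.map f) ≤ Nat.card X := by
  have hs : Function.Surjective (fun x : X => (⟨f x, ⟨x, x.2, rfl⟩⟩ : X.map f)) := by
    rintro ⟨z, x, hx, rfl⟩
    exact ⟨⟨x, hx⟩, rfl⟩
  exact Nat.card_le_card_of_surjective _ hs

/-- Lemma 4.3: if `H₁, H₂` are distinct maximal subgroups of `H` with
`H₁^a, H₂^b ≤ G` for some `a, b ∈ K_n`, then `G = ⟨H₁^a, H₂^b⟩`. -/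
theorem stmt5 (n : ℕ) (H G H₁ H₂ : Subgroup (Equiv.Perm (Leaf n)))
    (hH : H ≤ W n) (hG : G ≤ W n)
    (hHnc : ¬ IsCyclic ↥H) (hGnc : ¬ IsCyclic ↥G)
    (htriv : H ⊓ K n = ⊥)
    (hcard : Nat.card H = Nat.card G)
    (helem : ∀ h ∈ H, ∃ a ∈ K n, a⁻¹ * h * a ∈ G)
    (hmax1 : IsMaximalIn H₁ H) (hmax2 : IsMaximalIn H₂ H) (hne : H₁ ≠ H₂)
    (a b : Equiv.Perm (Leaf n)) (ha : a ∈ K n) (hb : b ∈ K n)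
    (h1 : conjBy a H₁ ≤ G) (h2 : conjBy b H₂ ≤ G) :
    G = conjBy a H₁ ⊔ conjBy b H₂ := by
    classical
  set π := treePi n with hπdef
  have hH1H : H₁ ≤ H := le_of_lt hmax1.1
  have hH2H : H₂ ≤ H := le_of_lt hmax2.1
  have hsup : H₁ ⊔ H₂ = H := by
    have hne2 : ¬ H₂ ≤ H₁ := by
      intro hle
      rcases lt_or_eq_of_le hle with hlt | heq
      · have := hmax2.2 H₁ hlt hH1H
        exact absurd (this ▸ hmax1.1) (lt_irrefl H)
      · exact hne heq.symm
    have h12 : H₁ < H₁ ⊔ H₂ := lt_of_le_of_ne le_sup_left (by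
      intro heq; exact hne2 (heq ▸ le_sup_right))
    exact hmax1.2 _ h12 (sup_le hH1H hH2H)
  set J := conjBy a H₁ ⊔ conjBy b H₂ with hJdef
  have hJG : J ≤ G := sup_le h1 h2
  have haW : a ∈ W n := KleW n ha
  have hbW : b ∈ W n := KleW n hb
  have hJW : J ≤ W n := le_trans hJG hG
  have hinjH : ∀ x ∈ H.subgroupOf (W n), π x = 1 → x = 1 := by
    intro x hx hpx
    have hxK : (x : Equiv.Perm (Leaf n)) ∈ K n := (mem_K_iff x.2).2 hpx
    have hxb : (x : Equiv.Perm (Leaf n)) ∈ H ⊓ K n := ⟨hx, hxK⟩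
    rw [htriv] at hxb
    exact Subtype.ext (Subgroup.mem_bot.mp hxb)
  have hcardH' : Nat.card (H.subgroupOf (W n)) = Nat.card H :=
    Nat.card_congr (Subgroup.subgroupOfEquivOfLe hH).toEquiv
  have hcardJ' : Nat.card (J.subgroupOf (W n)) = Nat.card J :=
    Nat.card_congr (Subgroup.subgroupOfEquivOfLe hJW).toEquiv
  have hsubOf : (H₁ ⊔ H₂).subgroupOf (W n) =
      H₁.subgroupOf (W n) ⊔ H₂.subgroupOf (W n) := by
    apply Subgroup.map_injective (W n).subtype_injective
    rw [Subgroup.map_sup, Subgroup.subgroupOf_map_subtype, Subgroup.subgroupOf_map_subtype,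
        Subgroup.subgroupOf_map_subtype]
    rw [inf_eq_left.mpr (sup_le hH1H hH2H |>.trans hH),
        inf_eq_left.mpr (hH1H.trans hH), inf_eq_left.mpr (hH2H.trans hH)]
  have hpa : π (⟨a, haW⟩ : W n) = 1 := (mem_K_iff haW).1 ha
  have hpb : π (⟨b, hbW⟩ : W n) = 1 := (mem_K_iff hbW).1 hb
  have key1 : (H₁.subgroupOf (W n)).map π ≤ (J.subgroupOf (W n)).map π := by
    rintro z ⟨x, hx, rfl⟩
    refine ⟨(⟨a, haW⟩ : W n)⁻¹ * x * ⟨a, haW⟩, ?_, by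
      simp [map_mul, map_inv, hpa]⟩
    have hmem : a⁻¹ * (x : Equiv.Perm (Leaf n)) * a ∈ conjBy a H₁ := by
      refine ⟨x, Subgroup.mem_subgroupOf.mp hx, ?_⟩
      simp [conjBy, MulAut.conj, mul_assoc]
    exact Subgroup.mem_subgroupOf.mpr (le_sup_left (a := conjBy a H₁) (b := conjBy b H₂) hmem)
  have key2 : (H₂.subgroupOf (W n)).map π ≤ (J.subgroupOf (W n)).map π := by
    rintro z ⟨x, hx, rfl⟩
    refine ⟨(⟨b, hbW⟩ : W n)⁻¹ * x * ⟨b, hbW⟩, ?_, by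
      simp [map_mul, map_inv, hpb]⟩
    have hmem : b⁻¹ * (x : Equiv.Perm (Leaf n)) * b ∈ conjBy b H₂ := by
      refine ⟨x, Subgroup.mem_subgroupOf.mp hx, ?_⟩
      simp [conjBy, MulAut.conj, mul_assoc]
    exact Subgroup.mem_subgroupOf.mpr (le_sup_right (a := conjBy a H₁) (b := conjBy b H₂) hmem)
  have hmaple : (H.subgroupOf (W n)).map π ≤ (J.subgroupOf (W n)).map π := by
    rw [← hsup, hsubOf, Subgroup.map_sup]
    exact sup_le key1 key2
  have hle2 : Nat.card G ≤ Nat.card J := by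
    calc Nat.card G = Nat.card H := hcard.symm
      _ = Nat.card (H.subgroupOf (W n)) := hcardH'.symm
      _ = Nat.card ((H.subgroupOf (W n)).map π) :=
          (card_map_eq_of_ker_triv π _ hinjH).symm
      _ ≤ Nat.card ((J.subgroupOf (W n)).map π) := Subgroup.card_le_of_le hmaple
      _ ≤ Nat.card (J.subgroupOf (W n)) := card_map_le' π _
      _ = Nat.card J := hcardJ'
  exact (Subgroup.eq_of_le_of_card_ge hJG hle2).symm
end

section
/- Let $H, G \leq W_n$ be non-cyclic subgroups with $H \cap K_n = \{\mathrm{id}\}$, $|H| = |G|$, and $H$ elementwise $K_n$-conjugate into $G$. Let $H_1, H_2$ be two distinct maximal subgroups of $H$ and suppose $G = \langle H_1, H_2^a \rangle$ for some $a \in K_n$. Then $H$ is globally $K_n$-conjugate into $G$ (i.e., $H^b \leq G$ for some $b \in K_n$) if and only if $a \in C_{K_n}(H_1) C_{K_n}(x)$ for some $x \in H_2 \setminus H_1$. -/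
section Aux

variable {n : ℕ}

lemma mem_W_of_mem_K {σ : Equiv.Perm (Leaf n)} (h : σ ∈ K n) : σ ∈ W n := by
  obtain ⟨τ, -, rfl⟩ := h; exact τ.2

lemma res_eq_of_mem_K {σ : Equiv.Perm (Leaf n)} (h : σ ∈ K n) (x : Leaf n) :
    res (σ x) = res x := by
  obtain ⟨τ, hτ, rfl⟩ := h
  have h1 : agree n (n - 1) (ext (res x)) x := (agree_iff_res _ _).2 (res_ext _)
  have h2 := (τ.2 (n - 1) _ _).1 h1
  have h3 := (agree_iff_res _ _).1 h2
  have h4 : res ((τ : Equiv.Perm (Leaf n)) (ext (res x))) = res x := by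
    have : (treePi n) τ (res x) = res x := by rw [hτ]; rfl
    exact this
  rw [h4] at h3
  exact h3.symm

/-- Flip the last coordinate of a leaf. -/
def flipLast {n : ℕ} (x : Leaf n) : Leaf n := fun i => if (i : ℕ) + 1 = n then !(x i) else x i

lemma flipLast_flipLast (x : Leaf n) : flipLast (flipLast x) = x := by
  funext i; by_cases h : (i : ℕ) + 1 = n <;> simp [flipLast, h]

lemma eq_or_flip {σ : Equiv.Perm (Leaf n)} (hres : ∀ x, res (σ x) = res x) (x : Leaf n) :
    σ x = x ∨ σ x = flipLast x := by
  have hlow : ∀ i : Fin n, (i : ℕ) < n - 1 → σ x i = x i := by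
    intro i hi
    have := congrFun (hres x) ⟨(i : ℕ), hi⟩
    exact this
  by_cases hfix : σ x = x
  · exact Or.inl hfix
  right
  funext i
  by_cases hi : (i : ℕ) + 1 = n
  · have hnei : σ x i ≠ x i := by
      intro hEq
      apply hfix
      funext j
      by_cases hj : (j : ℕ) < n - 1
      · exact hlow j hj
      · have hji : j = i := by
          have h1 := j.isLt
          have h2 := i.isLt
          exact Fin.ext (by omega)
        rw [hji]; exact hEq
    simp only [flipLast, if_pos hi]
    cases h1 : x i <;> cases h2 : σ x i <;> simp_all
  · have hi' : (i : ℕ) < n - 1 := by have := i.isLt; omega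
    simp only [flipLast, if_neg hi]
    exact hlow i hi'

lemma flip_consist₀ {σ : Equiv.Perm (Leaf n)} (hP : ∀ y, σ y = y ∨ σ y = flipLast y)
    {x : Leaf n} (h : σ x = x) : σ (flipLast x) = flipLast x := by
  rcases hP (flipLast x) with h2 | h2
  · exact h2
  · have hx : flipLast x = x :=
      σ.injective (h2.trans ((flipLast_flipLast x).trans h.symm))
    rw [hx]; exact h

lemma flip_consist₁ {σ : Equiv.Perm (Leaf n)} (hP : ∀ y, σ y = y ∨ σ y = flipLast y)
    {x : Leaf n} (h : σ x = flipLast x) : σ (flipLast x) = x := by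
  rcases hP (flipLast x) with h2 | h2
  · have hx : x = flipLast x := σ.injective (h.trans h2.symm)
    rw [← hx] at h2 ⊢
    exact h2
  · rw [h2, flipLast_flipLast]

lemma K_comm {σ τ : Equiv.Perm (Leaf n)} (hσK : σ ∈ K n) (hτK : τ ∈ K n) :
    σ * τ = τ * σ := by
  have hσ : ∀ y, σ y = y ∨ σ y = flipLast y := eq_or_flip (res_eq_of_mem_K hσK)
  have hτ : ∀ y, τ y = y ∨ τ y = flipLast y := eq_or_flip (res_eq_of_mem_K hτK)
  refine Equiv.ext fun x => ?_
  simp only [Equiv.Perm.mul_apply]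
  rcases hτ x with h | h <;> rcases hσ x with g | g
  · rw [h, g]; exact h.symm
  · rw [h, g, flip_consist₀ hτ h]
  · rw [h, g, flip_consist₀ hσ g]; exact h.symm
  · rw [h, g, flip_consist₁ hσ g, flip_consist₁ hτ h]

lemma K_conj {h k : Equiv.Perm (Leaf n)} (hh : h ∈ W n) (hk : k ∈ K n) :
    h * k * h⁻¹ ∈ K n := by
  obtain ⟨κ, hκ, rfl⟩ := hk
  refine ⟨⟨h, hh⟩ * κ * ⟨h, hh⟩⁻¹, ?_, rfl⟩
  have hκ1 : treePi n κ = 1 := MonoidHom.mem_ker.mp hκ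
  simp [MonoidHom.mem_ker, map_mul, map_inv, hκ1]

lemma mem_conjBy {Gr : Type*} [Group Gr] {b g : Gr} {X : Subgroup Gr} :
    g ∈ conjBy b X ↔ b * g * b⁻¹ ∈ X := by
  constructor
  · rintro ⟨h, hh, rfl⟩
    simp only [MulEquiv.coe_toMonoidHom, MulAut.conj_apply]
    have e : b * (b⁻¹ * h * b⁻¹⁻¹) * b⁻¹ = h := by group
    rw [e]; exact hh
  · intro hg
    exact ⟨b * g * b⁻¹, hg, by
      simp only [MulEquiv.coe_toMonoidHom, MulAut.conj_apply]; group⟩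

end Aux

/-- Lemma 4.4: with `G = ⟨H₁, H₂^a⟩`, `H` is globally `K_n`-conjugate into
`G` iff `a ∈ C_{K_n}(H₁) C_{K_n}(x)` for some `x ∈ H₂ \ H₁`. -/
theorem stmt6 (n : ℕ) (H G H₁ H₂ : Subgroup (Equiv.Perm (Leaf n)))
    (hH : H ≤ W n) (hG : G ≤ W n)
    (hHnc : ¬ IsCyclic ↥H) (hGnc : ¬ IsCyclic ↥G)
    (htriv : H ⊓ K n = ⊥)
    (hcard : Nat.card H = Nat.card G)
    (helem : ∀ h ∈ H, ∃ a ∈ K n, a⁻¹ * h * a ∈ G)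
    (hmax1 : IsMaximalIn H₁ H) (hmax2 : IsMaximalIn H₂ H) (hne : H₁ ≠ H₂)
    (a : Equiv.Perm (Leaf n)) (ha : a ∈ K n)
    (hGgen : G = H₁ ⊔ conjBy a H₂) :
    (∃ b ∈ K n, conjBy b H ≤ G) ↔
      ∃ x ∈ H₂, x ∉ H₁ ∧ ∃ c ∈ K n, ∃ d ∈ K n,
        (∀ h ∈ H₁, c * h = h * c) ∧ d * x = x * d ∧ a = c * d := by
  have hH₁H : H₁ ≤ H := hmax1.1.le
  have hH₂H : H₂ ≤ H := hmax2.1.le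
  constructor
  · rintro ⟨b, hb, hbH⟩
    have hcard2 : Nat.card (conjBy b H) = Nat.card H := by
      unfold conjBy
      exact (Nat.card_congr
        (Subgroup.equivMapOfInjective H (MulAut.conj b⁻¹).toMonoidHom
          (MulAut.conj b⁻¹).injective).toEquiv).symm
    have hGeq : conjBy b H = G :=
      Subgroup.eq_of_le_of_card_ge hbH (le_of_eq (hcard.symm.trans hcard2.symm))
    have hab : a * b⁻¹ ∈ K n := (K n).mul_mem ha ((K n).inv_mem hb)
    -- c := b commutes with H₁
    have hc : ∀ h ∈ H₁, b * h = h * b := by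
      intro h hh
      have hhG : h ∈ G := by rw [hGgen]; exact (le_sup_left : H₁ ≤ _) hh
      rw [← hGeq] at hhG
      have hmem : b * h * b⁻¹ ∈ H := mem_conjBy.mp hhG
      have hK : (b * h * b⁻¹) * h⁻¹ ∈ K n := by
        have h1 : h * b⁻¹ * h⁻¹ ∈ K n := K_conj (hH (hH₁H hh)) ((K n).inv_mem hb)
        have he : (b * h * b⁻¹) * h⁻¹ = b * (h * b⁻¹ * h⁻¹) := by group
        rw [he]; exact (K n).mul_mem hb h1
      have hmemH : (b * h * b⁻¹) * h⁻¹ ∈ H := H.mul_mem hmem (H.inv_mem (hH₁H hh))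
      have hbot : (b * h * b⁻¹) * h⁻¹ ∈ H ⊓ K n := ⟨hmemH, hK⟩
      rw [htriv] at hbot
      have h2 : b * h * b⁻¹ = h := mul_inv_eq_one.mp (Subgroup.mem_bot.mp hbot)
      calc b * h = (b * h * b⁻¹) * b := by group
        _ = h * b := by rw [h2]
    -- d := a * b⁻¹ commutes with H₂
    have hd : ∀ h ∈ H₂, (a * b⁻¹) * h = h * (a * b⁻¹) := by
      intro h hh
      have hhG : a⁻¹ * h * a ∈ G := by
        rw [hGgen]
        refine (le_sup_right : conjBy a H₂ ≤ _) (mem_conjBy.mpr ?_)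
        have he : a * (a⁻¹ * h * a) * a⁻¹ = h := by group
        rw [he]; exact hh
      rw [← hGeq] at hhG
      have hmem : b * (a⁻¹ * h * a) * b⁻¹ ∈ H := mem_conjBy.mp hhG
      have hK : (b * (a⁻¹ * h * a) * b⁻¹) * h⁻¹ ∈ K n := by
        have h1 : h * (a * b⁻¹) * h⁻¹ ∈ K n := K_conj (hH (hH₂H hh)) hab
        have h2 : b * a⁻¹ ∈ K n := (K n).mul_mem hb ((K n).inv_mem ha)
        have he : (b * (a⁻¹ * h * a) * b⁻¹) * h⁻¹
            = (b * a⁻¹) * (h * (a * b⁻¹) * h⁻¹) := by group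
        rw [he]; exact (K n).mul_mem h2 h1
      have hmemH : (b * (a⁻¹ * h * a) * b⁻¹) * h⁻¹ ∈ H :=
        H.mul_mem hmem (H.inv_mem (hH₂H hh))
      have hbot : (b * (a⁻¹ * h * a) * b⁻¹) * h⁻¹ ∈ H ⊓ K n := ⟨hmemH, hK⟩
      rw [htriv] at hbot
      have h2 : b * (a⁻¹ * h * a) * b⁻¹ = h := mul_inv_eq_one.mp (Subgroup.mem_bot.mp hbot)
      calc (a * b⁻¹) * h = (a * b⁻¹) * (b * (a⁻¹ * h * a) * b⁻¹) := by rw [h2]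
        _ = h * (a * b⁻¹) := by group
    -- find x ∈ H₂ \ H₁
    have hx : ∃ x ∈ H₂, x ∉ H₁ := by
      by_contra hcon
      push_neg at hcon
      have hle : H₂ ≤ H₁ := hcon
      rcases eq_or_lt_of_le hle with hEq | hlt
      · exact hne hEq.symm
      · exact absurd (hmax2.2 H₁ hlt hH₁H) (ne_of_lt hmax1.1)
    obtain ⟨x, hx2, hx1⟩ := hx
    refine ⟨x, hx2, hx1, b, hb, a * b⁻¹, hab, hc, hd x hx2, ?_⟩
    have hba : b * a = a * b := K_comm hb ha
    rw [← mul_assoc, hba]; group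
  · rintro ⟨x, hx2, hx1, c, hcK, d, hdK, hc, hdx, hacd⟩
    refine ⟨c, hcK, ?_⟩
    have hxH : x ∈ H := hH₂H hx2
    have hsup : H₁ ⊔ Subgroup.zpowers x = H := by
      apply hmax1.2
      · refine lt_of_le_of_ne le_sup_left ?_
        intro hEq
        have hxm : x ∈ H₁ ⊔ Subgroup.zpowers x :=
          (le_sup_right : Subgroup.zpowers x ≤ _) (Subgroup.mem_zpowers x)
        rw [← hEq] at hxm
        exact hx1 hxm
      · exact sup_le hH₁H (Subgroup.zpowers_le.mpr hxH)
    rw [hGgen, ← hsup]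
    unfold conjBy
    rw [Subgroup.map_sup]
    apply sup_le
    · intro g hg
      obtain ⟨h, hh, rfl⟩ := hg
      have he : (MulAut.conj c⁻¹).toMonoidHom h = h := by
        simp only [MulEquiv.coe_toMonoidHom, MulAut.conj_apply]
        have hch := hc h hh
        calc c⁻¹ * h * c⁻¹⁻¹ = c⁻¹ * (h * c) := by group
          _ = c⁻¹ * (c * h) := by rw [← hch]
          _ = h := by group
      rw [he]
      exact (le_sup_left : H₁ ≤ _) hh
    · rw [MonoidHom.map_zpowers]
      rw [Subgroup.zpowers_le]
      have hdc : Commute d c := K_comm hdK hcK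
      have hdx' : Commute d x := hdx
      have hy : Commute d (c⁻¹ * x * c) := (hdc.inv_right.mul_right hdx').mul_right hdc
      have h2 : d⁻¹ * (c⁻¹ * x * c) * d = c⁻¹ * x * c := by
        have h3 := hy.inv_left.eq
        rw [h3]; group
      have hkey : (MulAut.conj c⁻¹).toMonoidHom x = (MulAut.conj a⁻¹).toMonoidHom x := by
        simp only [MulEquiv.coe_toMonoidHom, MulAut.conj_apply]
        rw [hacd]
        simp only [inv_inv, mul_inv_rev]
        calc c⁻¹ * x * c = d⁻¹ * (c⁻¹ * x * c) * d := h2.symm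
          _ = d⁻¹ * c⁻¹ * x * (c * d) := by group
      rw [hkey]
      exact (le_sup_right : Subgroup.map (MulAut.conj a⁻¹).toMonoidHom H₂ ≤ _)
        ⟨x, hx2, rfl⟩
end

section
/- Let $H, G \leq W_n$ be non-cyclic subgroups with $H \cap K_n = \{\mathrm{id}\}$, $|H| = |G|$, and $H$ elementwise $K_n$-conjugate into $G$. Let $H_1, H_2$ be two distinct maximal subgroups of $H$ and suppose $G = \langle H_1, H_2^a \rangle$ for some $a \in K_n$. Then $a$ centralizes the Frattini subgroup $\Phi(H)$, i.e. $a \in C_{K_n}(\Phi(H))$. -/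
lemma card_eq_range_mul_ker {A B : Type*} [Group A] [Group B] [Finite A] (f : A →* B) :
    Nat.card A = Nat.card f.range * Nat.card f.ker := by
  rw [Subgroup.card_eq_card_quotient_mul_card_subgroup f.ker]
  congr 1
  exact Nat.card_congr (QuotientGroup.quotientKerEquivRange f).toEquiv

/-- Lemma 4.5: with `G = ⟨H₁, H₂^a⟩`, the element `a` centralizes the
Frattini subgroup `Φ(H)`. -/
theorem stmt7 (n : ℕ) (H G H₁ H₂ : Subgroup (Equiv.Perm (Leaf n)))
    (hH : H ≤ W n) (hG : G ≤ W n)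
    (hHnc : ¬ IsCyclic ↥H) (hGnc : ¬ IsCyclic ↥G)
    (htriv : H ⊓ K n = ⊥)
    (hcard : Nat.card H = Nat.card G)
    (helem : ∀ h ∈ H, ∃ a ∈ K n, a⁻¹ * h * a ∈ G)
    (hmax1 : IsMaximalIn H₁ H) (hmax2 : IsMaximalIn H₂ H) (hne : H₁ ≠ H₂)
    (a : Equiv.Perm (Leaf n)) (ha : a ∈ K n)
    (hGgen : G = H₁ ⊔ conjBy a H₂) :
    ∀ h ∈ frattiniIn H, a * h = h * a := by
  classical
  obtain ⟨a', ha'ker, rfl⟩ := ha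
  simp only [Subgroup.coe_subtype] at hGgen ⊢
  have hπa' : treePi n a' = 1 := ha'ker
  have hH₂le : H₂ ≤ H := hmax2.1.le
  have hH₁le : H₁ ≤ H := hmax1.1.le
  have hΦ : frattiniIn H ≤ H := inf_le_left
  have hΦ1 : frattiniIn H ≤ H₁ :=
    le_trans inf_le_right (sInf_le (show H₁ ∈ {M | IsMaximalIn M H} from hmax1))
  have hΦ2 : frattiniIn H ≤ H₂ :=
    le_trans inf_le_right (sInf_le (show H₂ ∈ {M | IsMaximalIn M H} from hmax2))
  have hsup : H₁ ⊔ H₂ = H := by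
    refine hmax1.2 _ ?_ (sup_le hH₁le hH₂le)
    refine lt_of_le_of_ne le_sup_left ?_
    intro heq
    have h21 : H₂ ≤ H₁ := le_sup_right.trans heq.ge
    exact absurd (hmax2.2 H₁ (lt_of_le_of_ne h21 (Ne.symm hne)) hH₁le) hmax1.1.ne
  set ι := (W n).subtype with hιdef
  have hιinj : Function.Injective ι := (W n).subtype_injective
  have hmapc : ∀ X : Subgroup (Equiv.Perm (Leaf n)), X ≤ W n → (X.comap ι).map ι = X := by
    intro X hX
    rw [Subgroup.map_comap_eq, Subgroup.range_subtype]
    exact inf_eq_right.mpr hX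
  have hcardc : ∀ X : Subgroup (Equiv.Perm (Leaf n)), X ≤ W n →
      Nat.card (X.comap ι) = Nat.card X := by
    intro X hX
    rw [Nat.card_congr (Subgroup.equivMapOfInjective (X.comap ι) ι hιinj).toEquiv,
      hmapc X hX]
  have hconjmap : ((conjBy a' (H₂.comap ι)).map ι) = conjBy (↑a') H₂ := by
    show (((H₂.comap ι).map (MulAut.conj a'⁻¹).toMonoidHom).map ι)
      = H₂.map (MulAut.conj ((↑a' : Equiv.Perm (Leaf n)))⁻¹).toMonoidHom
    rw [Subgroup.map_map]
    have hcomp : ι.comp (MulAut.conj a'⁻¹).toMonoidHom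
        = ((MulAut.conj ((↑a' : Equiv.Perm (Leaf n)))⁻¹).toMonoidHom).comp ι := by
      ext x
      simp [hιdef, MulAut.conj]
    rw [hcomp, ← Subgroup.map_map, hmapc H₂ (hH₂le.trans hH)]
  have hGW : G.comap ι = H₁.comap ι ⊔ conjBy a' (H₂.comap ι) := by
    apply Subgroup.map_injective hιinj
    rw [hmapc G hG, Subgroup.map_sup, hmapc H₁ (hH₁le.trans hH), hconjmap, hGgen]
  have hHW : H.comap ι = H₁.comap ι ⊔ H₂.comap ι := by
    apply Subgroup.map_injective hιinj
    rw [hmapc H hH, Subgroup.map_sup, hmapc H₁ (hH₁le.trans hH),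
      hmapc H₂ (hH₂le.trans hH), hsup]
  have hπconj : (conjBy a' (H₂.comap ι)).map (treePi n) = (H₂.comap ι).map (treePi n) := by
    show (((H₂.comap ι).map (MulAut.conj a'⁻¹).toMonoidHom).map (treePi n)) = _
    rw [Subgroup.map_map]
    congr 1
    ext x
    simp [MulAut.conj, hπa']
  have hmapπ : (G.comap ι).map (treePi n) = (H.comap ι).map (treePi n) := by
    rw [hGW, hHW, Subgroup.map_sup, Subgroup.map_sup, hπconj]
  have hkerH : (H.comap ι) ⊓ (treePi n).ker = ⊥ := by
    rw [eq_bot_iff]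
    rintro x ⟨hx1, hx2⟩
    have hm : (↑x : Equiv.Perm (Leaf n)) ∈ H ⊓ K n := ⟨hx1, ⟨x, hx2, rfl⟩⟩
    rw [htriv] at hm
    exact Subgroup.mem_bot.mpr (Subtype.ext (Subgroup.mem_bot.mp hm))
  have hrange : ∀ X : Subgroup ↥(W n),
      ((treePi n).comp X.subtype).range = X.map (treePi n) := by
    intro X
    rw [MonoidHom.range_comp, Subgroup.range_subtype]
  have hkerfH : ((treePi n).comp (H.comap ι).subtype).ker = ⊥ := by
    rw [eq_bot_iff]
    intro x hx
    have hx' : (↑x : ↥(W n)) ∈ (treePi n).ker := MonoidHom.mem_ker.mpr (MonoidHom.mem_ker.mp hx)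
    have hm : (↑x : ↥(W n)) ∈ (H.comap ι) ⊓ (treePi n).ker := ⟨x.2, hx'⟩
    rw [hkerH] at hm
    exact Subgroup.mem_bot.mpr (Subtype.ext (Subgroup.mem_bot.mp hm))
  have hcH : Nat.card (H.comap ι) = Nat.card ((H.comap ι).map (treePi n)) := by
    have h1 := card_eq_range_mul_ker ((treePi n).comp (H.comap ι).subtype)
    rw [hrange, hkerfH, Subgroup.card_bot, mul_one] at h1
    exact h1
  have hcG : Nat.card (G.comap ι)
      = Nat.card ((G.comap ι).map (treePi n))
        * Nat.card ((treePi n).comp (G.comap ι).subtype).ker := by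
    have h1 := card_eq_range_mul_ker ((treePi n).comp (G.comap ι).subtype)
    rwa [hrange] at h1
  have hcards : Nat.card (G.comap ι) = Nat.card (H.comap ι) := by
    rw [hcardc G hG, hcardc H hH, hcard]
  have hkerfG : ((treePi n).comp (G.comap ι).subtype).ker = ⊥ := by
    rw [← Subgroup.card_eq_one]
    have hpos : 0 < Nat.card ((H.comap ι).map (treePi n)) := Nat.card_pos
    have h2 : Nat.card ((H.comap ι).map (treePi n))
        * Nat.card ((treePi n).comp (G.comap ι).subtype).ker
        = Nat.card ((H.comap ι).map (treePi n)) := by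
      calc Nat.card ((H.comap ι).map (treePi n))
            * Nat.card ((treePi n).comp (G.comap ι).subtype).ker
          = Nat.card ((G.comap ι).map (treePi n))
            * Nat.card ((treePi n).comp (G.comap ι).subtype).ker := by rw [hmapπ]
        _ = Nat.card (G.comap ι) := hcG.symm
        _ = Nat.card (H.comap ι) := hcards
        _ = Nat.card ((H.comap ι).map (treePi n)) := hcH
    exact Nat.eq_of_mul_eq_mul_left hpos (h2.trans (mul_one _).symm)
  have hkerG : ∀ x : ↥(W n), x ∈ G.comap ι → x ∈ (treePi n).ker → x = 1 := by
    intro x hx1 hx2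
    have h3 : (⟨x, hx1⟩ : G.comap ι) ∈ ((treePi n).comp (G.comap ι).subtype).ker :=
      MonoidHom.mem_ker.mpr (MonoidHom.mem_ker.mp hx2)
    rw [hkerfG] at h3
    exact congrArg Subtype.val (Subgroup.mem_bot.mp h3)
  intro h hh
  have hhW : h ∈ W n := hH (hΦ hh)
  have hEG : (⟨h, hhW⟩ : ↥(W n)) ∈ G.comap ι := by
    show h ∈ G
    rw [hGgen]
    exact Subgroup.mem_sup_left (hΦ1 hh)
  have hcEG : a'⁻¹ * (⟨h, hhW⟩ : ↥(W n)) * a' ∈ G.comap ι := by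
    show (↑(a'⁻¹ * (⟨h, hhW⟩ : ↥(W n)) * a') : Equiv.Perm (Leaf n)) ∈ G
    rw [hGgen]
    apply Subgroup.mem_sup_right
    refine Subgroup.mem_map.mpr ⟨h, hΦ2 hh, ?_⟩
    simp [MulAut.conj, mul_assoc]
  have hπeq : a'⁻¹ * (⟨h, hhW⟩ : ↥(W n)) * a' * (⟨h, hhW⟩ : ↥(W n))⁻¹ ∈ (treePi n).ker := by
    refine MonoidHom.mem_ker.mpr ?_
    simp [map_mul, map_inv, hπa']
  have hone := hkerG _ (mul_mem hcEG (inv_mem hEG)) hπeq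
  have heq : a'⁻¹ * (⟨h, hhW⟩ : ↥(W n)) * a' = ⟨h, hhW⟩ := by
    have := mul_inv_eq_one.mp hone
    exact this
  have hcoe : (↑a' : Equiv.Perm (Leaf n))⁻¹ * h * ↑a' = h := by
    have := congrArg Subtype.val heq
    simpa using this
  have h1 : ↑a' * ((↑a' : Equiv.Perm (Leaf n))⁻¹ * h * ↑a') = h * ↑a' := by group
  calc (↑a' : Equiv.Perm (Leaf n)) * h
      = ↑a' * ((↑a' : Equiv.Perm (Leaf n))⁻¹ * h * ↑a') := by rw [hcoe]
    _ = h * ↑a' := h1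
end

section
/- Let $X \leq W_n$, $\alpha \in W_n \setminus X$, and $Y = \langle X, \alpha \rangle$. Suppose $v \in \mathbb{F}_2^{2^n}$ satisfies: (1) for every $\beta \in X$ there exists $u^{(\beta)} \in \mathrm{Fix}(\Phi(Y))$ with $\alpha(v) + \alpha\beta(v) = u^{(\beta)} + \alpha\beta(u^{(\beta)})$; and (2) $v \in \mathrm{Fix}(\Phi(Y))$. Then $v \in \mathrm{Fix}(\alpha) + \mathrm{Fix}(X)$. -/
open Equiv Subgroup

def coordStabilizer {L M : Type*} (v : L → M) : Subgroup (Perm L) where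
  carrier := {σ | ∀ i, v (σ i) = v i}
  one_mem' _ := rfl
  mul_mem' {σ τ} hσ hτ i := (hσ (τ i)).trans (hτ i)
  inv_mem' {σ} hσ i := by simpa using (hσ (σ⁻¹ i)).symm

section Tree

variable {n : ℕ}

theorem agree.trans {k : ℕ} {x y z : Leaf n} (hxy : agree n k x y) (hyz : agree n k y z) :
    agree n k x z :=
  fun i hi => (hxy i hi).trans (hyz i hi)

theorem agree_succ_iff {k : ℕ} {x y : Leaf n} (i : Fin n) (hi : (i : ℕ) = k)
    (hxy : agree n k x y) : agree n (k + 1) x y ↔ x i = y i := by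
  refine ⟨fun h => h i (by omega), fun h j hj => ?_⟩
  rcases Nat.lt_succ_iff_lt_or_eq.1 hj with hj | hj
  · exact hxy j hj
  · rwa [show j = i from Fin.ext (hj.trans hi.symm)]

/-- Squaring an automorphism that fixes the first `k` levels fixes the first `k + 1`:
at level `k` it either fixes a vertex or swaps it with its sibling. -/
theorem agree_pow_two_pow {σ : Perm (Leaf n)} (hσ : σ ∈ W n) {k : ℕ} (hk : k ≤ n)
    (x : Leaf n) : agree n k ((σ ^ 2 ^ k) x) x := by
  induction k generalizing x with
  | zero => exact fun i hi => absurd hi (Nat.not_lt_zero _)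
  | succ k ih =>
    set τ := σ ^ 2 ^ k
    have hτ : τ ∈ W n := pow_mem hσ _
    have hτx : ∀ y, agree n k (τ y) y := ih (by omega)
    have hsq : σ ^ 2 ^ (k + 1) = τ * τ := by rw [pow_succ, pow_mul, sq]
    let i : Fin n := ⟨k, by omega⟩
    have step := (hτ (k + 1) (τ x) x).symm
    rw [agree_succ_iff i rfl (hτx _), agree_succ_iff i rfl (hτx _)] at step
    rw [hsq, Perm.mul_apply, agree_succ_iff i rfl ((hτx _).trans (hτx _))]
    exact (by decide : ∀ a b c : Bool, (a = b ↔ b = c) → a = c) _ _ _ step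

theorem pow_two_pow_eq_one_of_mem_W {σ : Perm (Leaf n)} (hσ : σ ∈ W n) : σ ^ 2 ^ n = 1 :=
  Perm.ext fun x => funext fun i => agree_pow_two_pow hσ le_rfl x i i.isLt

theorem isPGroup_W (n : ℕ) : IsPGroup 2 (W n) :=
  fun σ => ⟨n, Subtype.ext (pow_two_pow_eq_one_of_mem_W σ.2)⟩

end Tree

section Frattini

variable {G : Type*} [Group G]

theorem IsPGroup.index_eq_of_isCoatom {p : ℕ} [Fact p.Prime] [Finite G] (hG : IsPGroup p G)
    {M : Subgroup G} (hM : IsCoatom M) : M.index = p := by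
  obtain ⟨k, hk⟩ := (hG.to_subgroup M).exists_card_eq
  obtain ⟨j, hj⟩ := hG.index M
  have hj0 : j ≠ 0 := by
    rintro rfl
    exact hM.1 (index_eq_one.1 (by simpa using hj))
  have hdvd : p ^ (k + 1) ∣ Nat.card G := by
    rw [← M.card_mul_index, hk, hj, ← pow_add]
    exact pow_dvd_pow p (by omega)
  obtain ⟨K, hK, hMK⟩ := Sylow.exists_subgroup_card_pow_succ hdvd hk
  have hMK' : M < K := lt_of_le_of_ne hMK fun h => by
    subst h
    exact (Nat.pow_right_injective (Fact.out : p.Prime).two_le).ne (by omega) (hk.symm.trans hK)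
  have hcard := M.card_mul_index
  rw [← card_top (G := G), ← hM.2 K hMK', hK, hk, pow_succ] at hcard
  exact Nat.eq_of_mul_eq_mul_left (pow_pos (Fact.out : p.Prime).pos k) hcard

theorem IsMaximalIn.isCoatom_subgroupOf {M Y : Subgroup G} (hM : IsMaximalIn M Y) :
    IsCoatom (M.subgroupOf Y) := by
  refine ⟨fun h => hM.1.not_ge (subgroupOf_eq_top.1 h), fun K hK => ?_⟩
  have hKY : K.map Y.subtype = Y := by
    refine hM.2 _ ?_ (map_subtype_le K)
    rwa [← map_subgroupOf_eq_of_le hM.1.le, map_subtype_lt_map_subtype]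
  rw [← comap_map_eq_self_of_injective Y.subtype_injective K, hKY]
  exact subgroupOf_self Y

/-- In a finite `2`-group every maximal subgroup has index `2`, so membership in it is a parity. -/
theorem IsMaximalIn.mul_mem_iff {M Y : Subgroup G} [Finite Y] (hY : IsPGroup 2 Y)
    (hM : IsMaximalIn M Y) {a b : G} (ha : a ∈ Y) (hb : b ∈ Y) :
    a * b ∈ M ↔ (a ∈ M ↔ b ∈ M) := by
  simpa [mem_subgroupOf] using mul_mem_iff_of_index_two
    (hY.index_eq_of_isCoatom hM.isCoatom_subgroupOf) (a := ⟨a, ha⟩) (b := ⟨b, hb⟩)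

theorem mem_frattiniIn_iff {Y : Subgroup G} {g : G} :
    g ∈ frattiniIn Y ↔ g ∈ Y ∧ ∀ M, IsMaximalIn M Y → g ∈ M := by
  simp [frattiniIn, mem_sInf]

variable {Y : Subgroup G} [Finite Y] (hY : IsPGroup 2 Y)
include hY

theorem mul_self_mem_frattiniIn {y : G} (hy : y ∈ Y) : y * y ∈ frattiniIn Y :=
  mem_frattiniIn_iff.2 ⟨mul_mem hy hy, fun _ hM => (hM.mul_mem_iff hY hy hy).2 Iff.rfl⟩

theorem commutator_mem_frattiniIn {y z : G} (hy : y ∈ Y) (hz : z ∈ Y) :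
    y * z * y⁻¹ * z⁻¹ ∈ frattiniIn Y := by
  have hyz : y * z * y⁻¹ ∈ Y := mul_mem (mul_mem hy hz) (inv_mem hy)
  refine mem_frattiniIn_iff.2 ⟨mul_mem hyz (inv_mem hz), fun M hM => ?_⟩
  rw [hM.mul_mem_iff hY hyz (inv_mem hz), hM.mul_mem_iff hY (mul_mem hy hz) (inv_mem hy),
    hM.mul_mem_iff hY hy hz, inv_mem_iff, inv_mem_iff]
  tauto

theorem le_normalizer_of_frattiniIn_le {Z : Subgroup G} (hΦZ : frattiniIn Y ≤ Z) (hZY : Z ≤ Y) :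
    Y ≤ normalizer (Z : Set G) := by
  have conj_mem : ∀ y ∈ Y, ∀ z ∈ Z, y * z * y⁻¹ ∈ Z := fun y hy z hz => by
    simpa using mul_mem (hΦZ (commutator_mem_frattiniIn hY hy (hZY hz))) hz
  refine fun y hy => mem_normalizer_iff.2 fun z => ⟨conj_mem y hy z, fun hz => ?_⟩
  simpa [mul_assoc] using conj_mem y⁻¹ (inv_mem hy) _ hz

theorem conj_mem_frattiniIn {y g : G} (hy : y ∈ Y) (hg : g ∈ frattiniIn Y) :
    y * g * y⁻¹ ∈ frattiniIn Y :=
  (mem_normalizer_iff.1 (le_normalizer_of_frattiniIn_le hY le_rfl inf_le_left hy) g).1 hg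

end Frattini

theorem mem_or_mul_mem_of_mem_zpowers_sup {G : Type*} [Group G] {Z : Subgroup G} {α : G}
    (hα : α ∈ normalizer (Z : Set G)) (hα2 : α * α ∈ Z) {y : G} (hy : y ∈ zpowers α ⊔ Z) :
    y ∈ Z ∨ α * y ∈ Z := by
  rw [← SetLike.mem_coe, coe_mul_of_left_le_normalizer_right _ _ (zpowers_le.2 hα)] at hy
  obtain ⟨_, ⟨k, rfl⟩, z, hz, rfl⟩ := hy
  have hsq : ∀ m : ℤ, α ^ (2 * m) ∈ Z := fun m => by
    rw [zpow_mul, zpow_two]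
    exact zpow_mem hα2 m
  obtain ⟨m, rfl | rfl⟩ := Int.even_or_odd' k
  · exact Or.inl (mul_mem (hsq m) hz)
  · refine Or.inr ?_
    rw [← mul_assoc, ← zpow_one_add, show 1 + (2 * m + 1) = 2 * (m + 1) by ring]
    exact mul_mem (hsq _) hz

section Decomposition

variable {L : Type*}

theorem exists_orbit_rep (Y : Subgroup (Perm L)) :
    ∃ r : L → L, (∀ i, ∃ y ∈ Y, y (r i) = i) ∧ ∀ y ∈ Y, ∀ i, r (y i) = r i := by
  refine ⟨fun i => (Quotient.mk (MulAction.orbitRel Y L) i).out, fun i => ?_, fun y hy i => ?_⟩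
  · obtain ⟨y, hy⟩ := MulAction.orbitRel_apply.1 (Quotient.mk_out (s := MulAction.orbitRel Y L) i)
    exact ⟨(y⁻¹ : Y), inv_mem y.2, by simp [← hy, Subgroup.smul_def]⟩
  · exact congrArg Quotient.out (Quotient.sound (MulAction.orbitRel_apply.2 ⟨⟨y, hy⟩, rfl⟩))

theorem exists_eq_add_of_mem_or_mul_mem {Y Z : Subgroup (Perm L)} {α : Perm L} {v : L → ZMod 2}
    (hα : α ∈ Y) (hZY : Z ≤ Y) (hYZ : ∀ y ∈ Y, y ∈ Z ∨ α * y ∈ Z)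
    (hw : Y ≤ coordStabilizer (v ∘ α + v)) (hfix : ∀ i, ∀ z ∈ Z, z i = α i → v (α i) = v i) :
    ∃ v₁ v₂ : L → ZMod 2, v = v₁ + v₂ ∧ α ∈ coordStabilizer v₁ ∧ Z ≤ coordStabilizer v₂ := by
  classical
  obtain ⟨r, hr, hrY⟩ := exists_orbit_rep Y
  let s : L → Prop := fun i => ∃ z ∈ Z, z (r i) = i
  let v₂ : L → ZMod 2 := fun i => if s i then 0 else v (α i) + v i
  refine ⟨v + v₂, v₂, ?_, fun i => ?_, fun z hz i => ?_⟩
  · ext i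
    simp only [Pi.add_apply]
    grind
  · have hri : r (α i) = r i := hrY α hα i
    have hwα : v (α (α i)) + v (α i) = v (α i) + v i := hw hα i
    show v (α i) + v₂ (α i) = v i + v₂ i
    by_cases hsi : s i <;> by_cases hsαi : s (α i) <;> simp only [v₂, hsi, hsαi, if_true, if_false]
    · obtain ⟨z, hz, hzi⟩ := hsi
      obtain ⟨z', hz', hz'i⟩ := hsαi
      rw [hfix i (z' * z⁻¹) (mul_mem hz' (inv_mem hz))
        (by rw [Perm.mul_apply, Perm.inv_eq_iff_eq.2 hzi.symm, ← hri, hz'i])]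
    · grind
    · grind
    · obtain ⟨y, hy, hyi⟩ := hr i
      rcases hYZ y hy with h | h
      · exact absurd ⟨y, h, hyi⟩ hsi
      · exact absurd ⟨α * y, h, by rw [hri, Perm.mul_apply, hyi]⟩ hsαi
  · have hrz : r (z i) = r i := hrY z (hZY hz) i
    have hs : s (z i) ↔ s i := by
      refine ⟨fun ⟨z', hz', h⟩ => ⟨z⁻¹ * z', mul_mem (inv_mem hz) hz', ?_⟩,
        fun ⟨z', hz', h⟩ => ⟨z * z', mul_mem hz hz', ?_⟩⟩
      · simp [← hrz, h]
      · rw [hrz, Perm.mul_apply, h]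
    have hwz : v (α (z i)) + v (z i) = v (α i) + v i := hw (hZY hz) i
    simp only [v₂, hs, hwz]

end Decomposition

section Invariance

variable {L : Type*} {X Y : Subgroup (Perm L)} [Finite Y] {α : Perm L} {v : L → ZMod 2}
  (hp : IsPGroup 2 Y) (hv : frattiniIn Y ≤ coordStabilizer v)
  (hE : ∀ β ∈ X, ∃ u : L → ZMod 2, frattiniIn Y ≤ coordStabilizer u ∧
    ∀ j, v (β j) + v j = u (α (β j)) + u j)
include hp hv hE

theorem le_coordStabilizer_comp_add (hY : Y = X ⊔ closure {α}) :
    Y ≤ coordStabilizer (v ∘ α + v) := by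
  have hXY : X ≤ Y := le_sup_left.trans hY.ge
  have hαY : α ∈ Y := hY.ge (mem_sup_right (mem_closure_singleton_self α))
  refine hY.le.trans (sup_le (fun β hβ j => ?_) ((closure_le _).2 (Set.singleton_subset_iff.2 ?_)))
  · obtain ⟨u, hu, hβE⟩ := hE β hβ
    have hu2 : u (α (β (α (β j)))) = u j := hu (mul_self_mem_frattiniIn hp (mul_mem hαY (hXY hβ))) j
    have hβαβ : β * α * β * α⁻¹ ∈ frattiniIn Y := by
      rw [show β * α * β * α⁻¹ = β * α * β⁻¹ * α⁻¹ * (α * (β * β) * α⁻¹) by group]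
      exact mul_mem (commutator_mem_frattiniIn hp (hXY hβ) hαY)
        (conj_mem_frattiniIn hp hαY (mul_self_mem_frattiniIn hp (hXY hβ)))
    have hv2 : v (β (α (β j))) = v (α j) := by simpa using hv hβαβ (α j)
    have h₁ := hβE j
    have h₂ := hβE (α (β j))
    rw [hu2, hv2] at h₂
    show v (α (β j)) + v (β j) = v (α j) + v j
    grind
  · intro j
    show v (α (α j)) + v (α j) = v (α j) + v j
    rw [show v (α (α j)) = v j from hv (mul_self_mem_frattiniIn hp hαY) j, add_comm]

theorem apply_eq_of_apply_eq_of_mem_frattiniIn_sup (hXY : X ≤ Y) {z : Perm L}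
    (hz : z ∈ frattiniIn Y ⊔ X) {i : L} (hzi : z i = α i) : v (α i) = v i := by
  have hX : X ≤ normalizer (frattiniIn Y : Set (Perm L)) :=
    hXY.trans (le_normalizer_of_frattiniIn_le hp le_rfl inf_le_left)
  rw [← SetLike.mem_coe, coe_mul_of_right_le_normalizer_left _ _ hX] at hz
  obtain ⟨φ, hφ, β, hβ, rfl⟩ := hz
  obtain ⟨u, hu, hβE⟩ := hE β⁻¹ (inv_mem hβ)
  have hαi : α i = φ (β i) := hzi.symm
  have h := hβE (β i)
  simp only [Perm.coe_inv, Equiv.symm_apply_apply] at h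
  rw [hαi, hu hφ] at h
  rw [hαi, hv hφ]
  grind

end Invariance

theorem stmt14_general (n : ℕ) (X : Subgroup (Equiv.Perm (Leaf n))) (hX : X ≤ W n)
    (α : Equiv.Perm (Leaf n)) (hαW : α ∈ W n)
    (Y : Subgroup (Equiv.Perm (Leaf n))) (hY : Y = X ⊔ Subgroup.closure {α})
    (v : Leaf n → ZMod 2)
    (h1 : ∀ β ∈ X, ∃ u : Leaf n → ZMod 2, (∀ γ ∈ frattiniIn Y, ∀ i, u (γ i) = u i) ∧
      ∀ i, v (α⁻¹ i) + v ((α * β)⁻¹ i) = u i + u ((α * β)⁻¹ i))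
    (h2 : ∀ γ ∈ frattiniIn Y, ∀ i, v (γ i) = v i) :
    ∃ v₁ v₂ : Leaf n → ZMod 2, v = v₁ + v₂ ∧ (∀ i, v₁ (α i) = v₁ i) ∧
      ∀ β ∈ X, ∀ i, v₂ (β i) = v₂ i := by
  have hXY : X ≤ Y := le_sup_left.trans hY.ge
  have hαY : α ∈ Y := hY.ge (mem_sup_right (mem_closure_singleton_self α))
  have hp : IsPGroup 2 Y := (isPGroup_W n).to_le
    (hY.le.trans (sup_le hX ((closure_le _).2 (Set.singleton_subset_iff.2 hαW))))
  have hE : ∀ β ∈ X, ∃ u : Leaf n → ZMod 2, frattiniIn Y ≤ coordStabilizer u ∧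
      ∀ j, v (β j) + v j = u (α (β j)) + u j := fun β hβ => by
    obtain ⟨u, hu, h⟩ := h1 β hβ
    exact ⟨u, hu, fun j => by simpa using h (α (β j))⟩
  set Z := frattiniIn Y ⊔ X
  have hZY : Z ≤ Y := sup_le inf_le_left hXY
  have hYZ : ∀ y ∈ Y, y ∈ Z ∨ α * y ∈ Z := fun y hy =>
    mem_or_mul_mem_of_mem_zpowers_sup (le_normalizer_of_frattiniIn_le hp le_sup_left hZY hαY)
      (mem_sup_left (mul_self_mem_frattiniIn hp hαY))
      (hY.le.trans (sup_le (le_sup_right.trans le_sup_right)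
        ((zpowers_eq_closure α).ge.trans le_sup_left)) hy)
  obtain ⟨v₁, v₂, hv, h₁, h₂⟩ := exists_eq_add_of_mem_or_mul_mem hαY hZY hYZ
    (le_coordStabilizer_comp_add hp h2 hE hY)
    fun i z hz hzi => apply_eq_of_apply_eq_of_mem_frattiniIn_sup hp h2 hE hXY hz hzi
  exact ⟨v₁, v₂, hv, h₁, fun β hβ => h₂ (mem_sup_right hβ)⟩

/-- Proposition 5.4: if `v ∈ Fix(Φ(Y))` and, for each `β ∈ X`, there is
`u⁽ᵝ⁾ ∈ Fix(Φ(Y))` with `α(v) + αβ(v) = u⁽ᵝ⁾ + αβ(u⁽ᵝ⁾)`, then `v ∈ Fix(α) + Fix(X)`. -/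
theorem stmt14 (n : ℕ) (X : Subgroup (Equiv.Perm (Leaf n))) (hX : X ≤ W n)
    (α : Equiv.Perm (Leaf n)) (hαW : α ∈ W n) (hαX : α ∉ X)
    (Y : Subgroup (Equiv.Perm (Leaf n))) (hY : Y = X ⊔ Subgroup.closure {α})
    (v : Leaf n → ZMod 2)
    (h1 : ∀ β ∈ X, ∃ u : Leaf n → ZMod 2, (∀ γ ∈ frattiniIn Y, ∀ i, u (γ i) = u i) ∧
      ∀ i, v (α⁻¹ i) + v ((α * β)⁻¹ i) = u i + u ((α * β)⁻¹ i))
    (h2 : ∀ γ ∈ frattiniIn Y, ∀ i, v (γ i) = v i) :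
    ∃ v₁ v₂ : Leaf n → ZMod 2, v = v₁ + v₂ ∧ (∀ i, v₁ (α i) = v₁ i) ∧
      ∀ β ∈ X, ∀ i, v₂ (β i) = v₂ i :=
  stmt14_general n X hX α hαW Y hY v h1 h2
end
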